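/- For 0 < α < 1/2, set γ(α) = α/(2α−1) and z(y,α) = y²(2α−1)/2, and let F(y,α) = y·M(γ(α), 3/2, z(y,α)) + [Γ(1−γ(α)) / (√(2(1−2α))·Γ(3/2−γ(α)))]·M(γ(α)−1/2, 1/2, z(y,α)). Suppose B : (0, 1/2) → (0, ∞) satisfies the free-boundary equation B(α)·F_y(B(α), α) = F(B(α), α) for every α ∈ (0, 1/2), where F_y denotes the derivative of F with respect to y. Then B(α) → ∞ as α → 0⁺. -/

import Mathlib

open Real Filter Polynomial

/-- Confluent hypergeometric function of the first kind,
`M(γ,β,z) = ∑ (γ)⁽ⁿ⁾ zⁿ / ((β)⁽ⁿ⁾ n!)`. -/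
noncomputable def M (γ β z : ℝ) : ℝ :=
  ∑' n : ℕ, ((ascPochhammer ℝ n).eval γ * z ^ n) /
    ((ascPochhammer ℝ n).eval β * (Nat.factorial n : ℝ))

/-- The candidate solution for `0 < α < 1/2`. -/
noncomputable def F (α y : ℝ) : ℝ :=
  y * M (α / (2 * α - 1)) (3 / 2) (y ^ 2 * (2 * α - 1) / 2) +
    Real.Gamma (1 - α / (2 * α - 1)) /
      (Real.sqrt (2 * (1 - 2 * α)) * Real.Gamma (3 / 2 - α / (2 * α - 1))) *
    M (α / (2 * α - 1) - 1 / 2) (1 / 2) (y ^ 2 * (2 * α - 1) / 2)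

open scoped Nat Topology

/-!
Put `z = y²(2α - 1)/2`, `γ = α/(2α - 1)` and `c = gammaRatio α`, so that
`F(y) = y M(γ, 3/2, z) + c M(γ - 1/2, 1/2, z)` and
`y F_y - F = 2y ⬝ z M_z(γ, 3/2, z) + c (2z M_z - M)(γ - 1/2, 1/2, z)`.
As `α → 0⁺` we have `γ → 0⁻`. Every `(γ)⁽ⁿ⁾` with `n ≥ 1` carries the factor `γ`, so the first
term is `O(|γ|)`; and at `γ = 0` the second operator maps `M(-1/2, 1/2, z)` to `-eᶻ`, a
coefficient comparison giving `2z M_z - M = -eᶻ + O(|γ|)`, uniformly for bounded `y`. Since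
`c → Γ(1)/(√2 Γ(3/2)) > 0`, for each `C` we get `y F_y - F < 0` on `0 < y ≤ C` once `α` is small,
so the free-boundary equation forces `B(α) > C`.
-/

section Pochhammer

variable {S : Type*} [Semiring S] [PartialOrder S] [IsOrderedRing S]

theorem ascPochhammer_eval_nonneg {x : S} (hx : 0 ≤ x) (n : ℕ) :
    0 ≤ (ascPochhammer S n).eval x := by
  induction n with
  | zero => simp
  | succ n ih =>
    rw [ascPochhammer_succ_eval]
    exact mul_nonneg ih (add_nonneg hx n.cast_nonneg)

theorem ascPochhammer_eval_le_eval {x y : S} (hx : 0 ≤ x) (hxy : x ≤ y) (n : ℕ) :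
    (ascPochhammer S n).eval x ≤ (ascPochhammer S n).eval y := by
  induction n with
  | zero => simp
  | succ n ih =>
    rw [ascPochhammer_succ_eval, ascPochhammer_succ_eval]
    exact mul_le_mul ih (by gcongr) (add_nonneg hx n.cast_nonneg)
      (ascPochhammer_eval_nonneg (hx.trans hxy) n)

end Pochhammer

theorem ascPochhammer_eval_succ_left {R : Type*} [CommSemiring R] (x : R) (n : ℕ) :
    (ascPochhammer R (n + 1)).eval x = x * (ascPochhammer R n).eval (x + 1) := by
  simp [ascPochhammer_succ_left, eval_comp]

theorem abs_ascPochhammer_eval_le (x : ℝ) (n : ℕ) :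
    |(ascPochhammer ℝ n).eval x| ≤ (ascPochhammer ℝ n).eval |x| := by
  induction n with
  | zero => simp
  | succ n ih =>
    rw [ascPochhammer_succ_eval, ascPochhammer_succ_eval, abs_mul]
    refine mul_le_mul ih ?_ (abs_nonneg _) (ascPochhammer_eval_nonneg (abs_nonneg x) n)
    exact (abs_add_le _ _).trans (by rw [Nat.abs_cast])

theorem natCast_mul_abs_ascPochhammer_eval_le {x : ℝ} (hx₁ : -1 ≤ x) (hx₀ : x ≤ 0) (n : ℕ) :
    n * |(ascPochhammer ℝ n).eval x| ≤ -x * n ! := by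
  cases n with
  | zero => simpa using hx₀
  | succ n =>
    have h₀ := ascPochhammer_eval_nonneg (S := ℝ) (by linarith : 0 ≤ x + 1) n
    have h₁ := ascPochhammer_eval_le_eval (by linarith : 0 ≤ x + 1) (by linarith : x + 1 ≤ 1) n
    rw [ascPochhammer_eval_one] at h₁
    rw [ascPochhammer_eval_succ_left, abs_mul, abs_of_nonpos hx₀, abs_of_nonneg h₀,
      Nat.factorial_succ]
    push_cast
    have h₂ := mul_le_mul_of_nonneg_left h₁ (neg_nonneg.2 hx₀)
    nlinarith [n.cast_nonneg (α := ℝ)]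

theorem ascPochhammer_eval_sub_le {x y : ℝ} (hx : 0 ≤ x) (hxy : x ≤ y) (n : ℕ) :
    y * ((ascPochhammer ℝ n).eval y - (ascPochhammer ℝ n).eval x) ≤
      n * (y - x) * (ascPochhammer ℝ n).eval y := by
  induction n with
  | zero => simp
  | succ n ih =>
    have hpx := ascPochhammer_eval_nonneg hx n
    have hpy := ascPochhammer_eval_le_eval hx hxy n
    rw [ascPochhammer_succ_eval, ascPochhammer_succ_eval]
    push_cast
    have hn : (0 : ℝ) ≤ n := n.cast_nonneg
    nlinarith [mul_le_mul_of_nonneg_right ih (by linarith : 0 ≤ y + n),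
      mul_le_mul_of_nonneg_left hpy (by linarith : 0 ≤ y - x), mul_nonneg hpx (sub_nonneg.2 hxy),
      mul_nonneg (mul_nonneg hn (sub_nonneg.2 hxy)) (hpx.trans hpy)]

section Series

variable {a : ℕ → ℝ} {A : ℝ}

theorem abs_tsum_le_mul_exp {f : ℕ → ℝ} {x : ℝ} (h : ∀ n, |f n| ≤ A * (x ^ n / n !)) :
    |∑' n, f n| ≤ A * exp x := by
  rw [exp_eq_exp_ℝ]
  exact tsum_of_norm_bounded (f := f) ((NormedSpace.expSeries_div_hasSum_exp x).mul_left A) h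

theorem abs_mul_pow_le (ha : ∀ n, |a n| ≤ A / n !) (z : ℝ) (n : ℕ) :
    |a n * z ^ n| ≤ A * (|z| ^ n / n !) := by
  rw [abs_mul, abs_pow, mul_div, ← div_mul_eq_mul_div]
  exact mul_le_mul_of_nonneg_right (ha n) (by positivity)

theorem summable_mul_pow (ha : ∀ n, |a n| ≤ A / n !) (z : ℝ) :
    Summable fun n => a n * z ^ n :=
  .of_norm_bounded ((Real.summable_pow_div_factorial |z|).mul_left A) (abs_mul_pow_le ha z)

theorem summable_natCast_mul_mul_pow (ha : ∀ n, |a n| ≤ A / n !) (z : ℝ) :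
    Summable fun n => n * a n * z ^ n := by
  refine .of_norm_bounded ((Real.summable_pow_div_factorial (2 * |z|)).mul_left A) fun n => ?_
  have hn : (n : ℝ) ≤ 2 ^ n := by exact_mod_cast n.lt_two_pow_self.le
  rw [Real.norm_eq_abs, mul_assoc, abs_mul, Nat.abs_cast, mul_pow]
  calc (n : ℝ) * |a n * z ^ n| ≤ 2 ^ n * (A * (|z| ^ n / n !)) :=
        mul_le_mul hn (abs_mul_pow_le ha z n) (abs_nonneg _) (by positivity)
    _ = A * (2 ^ n * |z| ^ n / n !) := by ring

theorem hasDerivAt_tsum_mul_pow (ha : ∀ n, |a n| ≤ A / n !) (z : ℝ) :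
    HasDerivAt (fun w => ∑' n, a n * w ^ n) (∑' n, a n * (n * z ^ (n - 1))) z := by
  set R := |z| + 1
  have hR : 1 ≤ R := by simp [R]
  have hz : z ∈ Metric.ball (0 : ℝ) R := by simp [R]
  refine hasDerivAt_tsum_of_isPreconnected (u := fun n => A * ((2 * R) ^ n / n !))
    ((Real.summable_pow_div_factorial _).mul_left A) Metric.isOpen_ball
    (convex_ball 0 R).isPreconnected (fun n w _ => (hasDerivAt_pow n w).const_mul (a n))
    (fun n w hw => ?_) hz (summable_mul_pow ha z) hz
  have hw : |w| ≤ R := by simpa using (Metric.mem_ball.1 hw).le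
  have hA : 0 ≤ A := (abs_nonneg _).trans (by simpa using ha 0)
  have hpow : n * |w| ^ (n - 1) ≤ (2 * R) ^ n := by
    calc n * |w| ^ (n - 1) ≤ 2 ^ n * R ^ n := by
          gcongr
          · exact_mod_cast n.lt_two_pow_self.le
          · exact (pow_le_pow_left₀ (abs_nonneg w) hw _).trans (pow_le_pow_right₀ hR (n.sub_le 1))
      _ = (2 * R) ^ n := (mul_pow _ _ _).symm
  rw [Real.norm_eq_abs, abs_mul, abs_mul, abs_pow, Nat.abs_cast]
  calc |a n| * (n * |w| ^ (n - 1)) ≤ A / n ! * (2 * R) ^ n :=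
        mul_le_mul (ha n) hpow (by positivity) (by positivity)
    _ = A * ((2 * R) ^ n / n !) := by ring

theorem mul_tsum_mul_natCast_mul_pow_sub_one (z : ℝ) :
    z * ∑' n, a n * (n * z ^ (n - 1)) = ∑' n, n * a n * z ^ n := by
  rw [← tsum_mul_left]
  congr 1
  ext (_ | n)
  · simp
  · simp only [Nat.add_sub_cancel, pow_succ]
    ring

end Series

noncomputable def kummerCoeff (γ β : ℝ) (n : ℕ) : ℝ :=
  (ascPochhammer ℝ n).eval γ / ((ascPochhammer ℝ n).eval β * n !)

theorem M_eq_tsum (γ β z : ℝ) : M γ β z = ∑' n, kummerCoeff γ β n * z ^ n := by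
  simp only [M, kummerCoeff, div_mul_eq_mul_div]

theorem hasDerivAt_M {γ β A : ℝ} (h : ∀ n, |kummerCoeff γ β n| ≤ A / n !) (z : ℝ) :
    HasDerivAt (M γ β) (∑' n, kummerCoeff γ β n * (n * z ^ (n - 1))) z := by
  rw [show M γ β = _ from funext (M_eq_tsum γ β)]
  exact hasDerivAt_tsum_mul_pow h z

theorem abs_kummerCoeff_le {γ β : ℝ} (h : |γ| ≤ β) (n : ℕ) : |kummerCoeff γ β n| ≤ 1 / n ! := by
  have hfact : (0 : ℝ) < n ! := by positivity
  rcases (ascPochhammer_eval_nonneg ((abs_nonneg γ).trans h) n).eq_or_lt with h0 | h0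
  · simp [kummerCoeff, ← h0]
  have hγ := (abs_ascPochhammer_eval_le γ n).trans (ascPochhammer_eval_le_eval (abs_nonneg γ) h n)
  rw [kummerCoeff, abs_div, abs_of_pos (mul_pos h0 hfact),
    div_le_div_iff₀ (mul_pos h0 hfact) hfact]
  nlinarith

theorem natCast_mul_abs_kummerCoeff_le {γ β : ℝ} (hγ₁ : -1 ≤ γ) (hγ₀ : γ ≤ 0) (hβ : 1 ≤ β)
    (n : ℕ) : n * |kummerCoeff γ β n| ≤ -γ / n ! := by
  have hfact : (0 : ℝ) < n ! := by positivity
  have hβn := ascPochhammer_eval_le_eval zero_le_one hβ n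
  rw [ascPochhammer_eval_one] at hβn
  have hγn := natCast_mul_abs_ascPochhammer_eval_le hγ₁ hγ₀ n
  rw [kummerCoeff, abs_div, abs_of_pos (mul_pos (hfact.trans_le hβn) hfact), mul_div_assoc',
    div_le_div_iff₀ (mul_pos (hfact.trans_le hβn) hfact) hfact]
  nlinarith [mul_le_mul_of_nonneg_left hβn (neg_nonneg.2 hγ₀)]

theorem abs_tsum_natCast_mul_kummerCoeff_mul_pow_le {γ β : ℝ} (hγ₁ : -1 ≤ γ) (hγ₀ : γ ≤ 0)
    (hβ : 1 ≤ β) (z : ℝ) :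
    |∑' n, n * kummerCoeff γ β n * z ^ n| ≤ -γ * exp |z| := by
  refine abs_tsum_le_mul_exp fun n => ?_
  rw [abs_mul, abs_mul, Nat.abs_cast, abs_pow, mul_div, ← div_mul_eq_mul_div]
  exact mul_le_mul_of_nonneg_right (natCast_mul_abs_kummerCoeff_le hγ₁ hγ₀ hβ n) (by positivity)

section HalfShift

variable {γ : ℝ} (hγ₁ : -1 / 2 ≤ γ) (hγ₀ : γ ≤ 0)
include hγ₁ hγ₀

theorem abs_ascPochhammer_eval_sub_half_le (n : ℕ) :
    |(ascPochhammer ℝ n).eval (γ - 1 / 2)| ≤ 2 * (ascPochhammer ℝ n).eval (1 / 2) := by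
  cases n with
  | zero => norm_num
  | succ m =>
    have hq₀ := ascPochhammer_eval_nonneg (S := ℝ) (by linarith : 0 ≤ γ + 1 / 2) m
    have hqp := ascPochhammer_eval_le_eval (by linarith : 0 ≤ γ + 1 / 2)
      (by linarith : γ + 1 / 2 ≤ 1 / 2) m
    rw [ascPochhammer_eval_succ_left, ascPochhammer_succ_eval,
      show γ - 1 / 2 + 1 = γ + 1 / 2 by ring, abs_mul, abs_of_nonpos (by linarith),
      abs_of_nonneg hq₀]
    nlinarith [m.cast_nonneg (α := ℝ)]

theorem abs_two_mul_sub_one_mul_ascPochhammer_eval_add_le (n : ℕ) :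
    |(2 * n - 1) * (ascPochhammer ℝ n).eval (γ - 1 / 2) + (ascPochhammer ℝ n).eval (1 / 2)| ≤
      -2 * γ * n * (ascPochhammer ℝ n).eval (1 / 2) := by
  cases n with
  | zero => norm_num
  | succ m =>
    have hx : 0 ≤ γ + 1 / 2 := by linarith
    have hxy : γ + 1 / 2 ≤ 1 / 2 := by linarith
    have hq₀ := ascPochhammer_eval_nonneg hx m
    have hqp := ascPochhammer_eval_le_eval hx hxy m
    have hdiff := ascPochhammer_eval_sub_le hx hxy m
    set p := (ascPochhammer ℝ m).eval (1 / 2)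
    set q := (ascPochhammer ℝ m).eval (γ + 1 / 2)
    have hm : (0 : ℝ) ≤ m := m.cast_nonneg
    have hK : |p - q + 2 * γ * q| ≤ -2 * γ * (m + 1) * p := by
      rw [abs_le]
      constructor <;> nlinarith [mul_nonneg (neg_nonneg.2 hγ₀) (hq₀.trans hqp)]
    rw [ascPochhammer_eval_succ_left, ascPochhammer_succ_eval,
      show γ - 1 / 2 + 1 = γ + 1 / 2 by ring,
      show (2 * ((m + 1 : ℕ) : ℝ) - 1) * ((γ - 1 / 2) * q) + p * (1 / 2 + m) =
        (1 / 2 + m) * (p - q + 2 * γ * q) by push_cast; ring,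
      abs_mul, abs_of_nonneg (by positivity)]
    push_cast
    nlinarith

theorem abs_kummerCoeff_sub_half_le (n : ℕ) :
    |kummerCoeff (γ - 1 / 2) (1 / 2) n| ≤ 2 / n ! := by
  have hpos := ascPochhammer_pos n (1 / 2 : ℝ) (by norm_num)
  have hfact : (0 : ℝ) < n ! := by positivity
  rw [kummerCoeff, abs_div, abs_of_pos (mul_pos hpos hfact), div_le_div_iff₀ (mul_pos hpos hfact)
    hfact]
  nlinarith [abs_ascPochhammer_eval_sub_half_le hγ₁ hγ₀ n]

theorem abs_two_mul_sub_one_mul_kummerCoeff_add_le (n : ℕ) :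
    |(2 * n - 1) * kummerCoeff (γ - 1 / 2) (1 / 2) n + 1 / n !| ≤ -2 * γ * n / n ! := by
  have hpos := ascPochhammer_pos n (1 / 2 : ℝ) (by norm_num)
  have hfact : (0 : ℝ) < n ! := by positivity
  have hsum : (2 * n - 1) * kummerCoeff (γ - 1 / 2) (1 / 2) n + 1 / n ! =
      ((2 * n - 1) * (ascPochhammer ℝ n).eval (γ - 1 / 2) + (ascPochhammer ℝ n).eval (1 / 2)) /
        ((ascPochhammer ℝ n).eval (1 / 2) * n !) := by
    rw [kummerCoeff]
    field_simp
  rw [hsum, abs_div, abs_of_pos (mul_pos hpos hfact), div_le_div_iff₀ (mul_pos hpos hfact) hfact]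
  nlinarith [abs_two_mul_sub_one_mul_ascPochhammer_eval_add_le hγ₁ hγ₀ n]

theorem two_mul_tsum_sub_tsum_kummerCoeff_sub_half_le (z : ℝ) :
    2 * ∑' n, n * kummerCoeff (γ - 1 / 2) (1 / 2) n * z ^ n -
        ∑' n, kummerCoeff (γ - 1 / 2) (1 / 2) n * z ^ n ≤ -2 * γ * exp (2 * |z|) - exp z := by
  set b := kummerCoeff (γ - 1 / 2) (1 / 2)
  have hb := abs_kummerCoeff_sub_half_le hγ₁ hγ₀
  have hdefect : ∀ n, |((2 * n - 1) * b n + 1 / n !) * z ^ n| ≤ -2 * γ * ((2 * |z|) ^ n / n !) := by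
    intro n
    have hn : (n : ℝ) ≤ 2 ^ n := by exact_mod_cast n.lt_two_pow_self.le
    rw [abs_mul, abs_pow, mul_pow]
    calc _ ≤ -2 * γ * n / n ! * |z| ^ n := mul_le_mul_of_nonneg_right
          (abs_two_mul_sub_one_mul_kummerCoeff_add_le hγ₁ hγ₀ n) (by positivity)
      _ ≤ -2 * γ * 2 ^ n / n ! * |z| ^ n := by gcongr; linarith
      _ = _ := by ring
  have hsum : Summable fun n => ((2 * n - 1) * b n + 1 / n !) * z ^ n :=
    .of_norm_bounded ((Real.summable_pow_div_factorial _).mul_left _) hdefect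
  have hsplit : 2 * ∑' n, n * b n * z ^ n - ∑' n, b n * z ^ n =
      ∑' n, ((2 * n - 1) * b n + 1 / n !) * z ^ n - exp z := by
    rw [exp_eq_exp_ℝ, ← (NormedSpace.expSeries_div_hasSum_exp z).tsum_eq, ← tsum_mul_left,
      ← ((summable_natCast_mul_mul_pow hb z).mul_left 2).tsum_sub (summable_mul_pow hb z),
      ← hsum.tsum_sub (Real.summable_pow_div_factorial z)]
    congr 1
    ext n
    ring
  rw [hsplit]
  linarith [(le_abs_self _).trans (abs_tsum_le_mul_exp hdefect)]

end HalfShift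

theorem mul_deriv_sub_eq {f g : ℝ → ℝ} {f' g' c t y : ℝ} (hf : HasDerivAt f f' (y ^ 2 * t / 2))
    (hg : HasDerivAt g g' (y ^ 2 * t / 2)) :
    y * deriv (fun y => y * f (y ^ 2 * t / 2) + c * g (y ^ 2 * t / 2)) y -
        (y * f (y ^ 2 * t / 2) + c * g (y ^ 2 * t / 2)) =
      y * (2 * (y ^ 2 * t / 2 * f')) + c * (2 * (y ^ 2 * t / 2 * g') - g (y ^ 2 * t / 2)) := by
  have hz : HasDerivAt (fun y => y ^ 2 * t / 2) (y * t) y := by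
    refine (((hasDerivAt_pow 2 y).mul_const t).div_const 2).congr_deriv ?_
    norm_num
    ring
  have hG := ((hasDerivAt_id' y).mul (hf.comp y hz)).add ((hg.comp y hz).const_mul c)
  rw [show deriv (fun y => y * f (y ^ 2 * t / 2) + c * g (y ^ 2 * t / 2)) y = _ from hG.deriv]
  simp only [Function.comp]
  ring

theorem mul_deriv_sub_le {γ t c y C : ℝ} (hγ₁ : -1 / 2 ≤ γ) (hγ₀ : γ ≤ 0) (ht₁ : -1 ≤ t)
    (ht₀ : t ≤ 0) (hc : 0 ≤ c) (hyC : |y| ≤ C) :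
    y * deriv (fun y => y * M γ (3 / 2) (y ^ 2 * t / 2) +
          c * M (γ - 1 / 2) (1 / 2) (y ^ 2 * t / 2)) y -
        (y * M γ (3 / 2) (y ^ 2 * t / 2) + c * M (γ - 1 / 2) (1 / 2) (y ^ 2 * t / 2)) ≤
      -2 * γ * (C + c) * exp (C ^ 2) - c * exp (-C ^ 2 / 2) := by
  have ha := abs_kummerCoeff_le (β := 3 / 2) (by rw [abs_of_nonpos hγ₀]; linarith)
  rw [mul_deriv_sub_eq (hasDerivAt_M ha _) (hasDerivAt_M (abs_kummerCoeff_sub_half_le hγ₁ hγ₀) _),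
    mul_tsum_mul_natCast_mul_pow_sub_one, mul_tsum_mul_natCast_mul_pow_sub_one, M_eq_tsum]
  set z := y ^ 2 * t / 2
  have hz : |z| ≤ C ^ 2 / 2 := by
    have : y ^ 2 ≤ C ^ 2 := by rw [← sq_abs]; exact pow_le_pow_left₀ (abs_nonneg y) hyC 2
    rw [abs_div, abs_mul, abs_of_nonneg (sq_nonneg y), abs_two]
    nlinarith [abs_le.2 ⟨ht₁, by linarith⟩, abs_nonneg t, sq_nonneg y]
  have hexp₁ : exp |z| ≤ exp (C ^ 2) := exp_le_exp.2 (by nlinarith [abs_nonneg z])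
  have hexp₂ : exp (2 * |z|) ≤ exp (C ^ 2) := exp_le_exp.2 (by linarith)
  have hexp₃ : exp (-C ^ 2 / 2) ≤ exp z := exp_le_exp.2 (by linarith [neg_abs_le z])
  have h₁ := abs_tsum_natCast_mul_kummerCoeff_mul_pow_le (β := 3 / 2) (by linarith) hγ₀
    (by norm_num) z
  have h₂ := two_mul_tsum_sub_tsum_kummerCoeff_sub_half_le hγ₁ hγ₀ z
  have hy : y * (2 * ∑' n, n * kummerCoeff γ (3 / 2) n * z ^ n) ≤ C * (-2 * γ * exp (C ^ 2)) := by
    refine (le_abs_self _).trans ?_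
    rw [abs_mul, abs_mul, abs_two]
    refine mul_le_mul hyC ?_ (by positivity) ((abs_nonneg y).trans hyC)
    linarith [mul_le_mul_of_nonneg_left hexp₁ (neg_nonneg.2 hγ₀)]
  nlinarith [mul_le_mul_of_nonneg_left h₂ hc, mul_le_mul_of_nonneg_left hexp₂ hc,
    mul_le_mul_of_nonneg_left hexp₃ hc]

noncomputable def gammaRatio (α : ℝ) : ℝ :=
  Gamma (1 - α / (2 * α - 1)) / (√(2 * (1 - 2 * α)) * Gamma (3 / 2 - α / (2 * α - 1)))

theorem div_two_mul_sub_one_mem_Icc {α : ℝ} (h₀ : 0 ≤ α) (h₁ : α ≤ 1 / 4) :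
    α / (2 * α - 1) ∈ Set.Icc (-1 / 2) 0 := by
  rw [Set.mem_Icc, le_div_iff_of_neg (by linarith)]
  exact ⟨by linarith, div_nonpos_of_nonneg_of_nonpos h₀ (by linarith)⟩

theorem gammaRatio_pos {α : ℝ} (h₀ : 0 ≤ α) (h₁ : α < 1 / 2) : 0 < gammaRatio α := by
  have hγ : α / (2 * α - 1) ≤ 0 := div_nonpos_of_nonneg_of_nonpos h₀ (by linarith)
  have h₁ := Gamma_pos_of_pos (by linarith : 0 < 1 - α / (2 * α - 1))
  have h₂ := Gamma_pos_of_pos (by linarith : 0 < 3 / 2 - α / (2 * α - 1))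
  have h₃ := sqrt_pos.2 (by linarith : 0 < 2 * (1 - 2 * α))
  unfold gammaRatio
  positivity

theorem continuousAt_gammaRatio : ContinuousAt gammaRatio 0 := by
  have hΓ {x : ℝ} (hx : 0 < x) : ContinuousAt Gamma x :=
    (differentiableAt_Gamma fun m => by linarith [m.cast_nonneg (α := ℝ)]).continuousAt
  have hγ : ContinuousAt (fun α : ℝ => α / (2 * α - 1)) 0 :=
    continuousAt_id.div (by fun_prop) (by norm_num)
  refine ((hΓ one_pos).comp_of_eq (continuousAt_const.sub hγ) (by simp)).div
    ((continuous_sqrt.comp (by fun_prop)).continuousAt.mul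
      ((hΓ (by norm_num : (0 : ℝ) < 3 / 2)).comp_of_eq (continuousAt_const.sub hγ) (by simp)))
    (by norm_num [(Gamma_pos_of_pos (by norm_num : (0 : ℝ) < 3 / 2)).ne'])

theorem stmt_13 (B : ℝ → ℝ) (hBpos : ∀ α ∈ Set.Ioo (0 : ℝ) (1 / 2), 0 < B α)
    (hB : ∀ α ∈ Set.Ioo (0 : ℝ) (1 / 2),
      B α * deriv (fun y => F α y) (B α) = F α (B α)) :
    Tendsto B (nhdsWithin 0 (Set.Ioo (0 : ℝ) (1 / 2))) atTop := by
  refine tendsto_atTop.2 fun C => ?_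
  set bound := fun α => -2 * (α / (2 * α - 1)) * (C + gammaRatio α) * exp (C ^ 2) -
    gammaRatio α * exp (-C ^ 2 / 2)
  have hbound : ∀ᶠ α in 𝓝 0, bound α < 0 := by
    have hγ : ContinuousAt (fun α : ℝ => α / (2 * α - 1)) 0 :=
      continuousAt_id.div (by fun_prop) (by norm_num)
    have hc := continuousAt_gammaRatio
    refine ContinuousAt.eventually_lt (f := bound) (by fun_prop) continuousAt_const ?_
    simp only [bound]
    norm_num
    exact mul_pos (gammaRatio_pos le_rfl (by norm_num)) (exp_pos _)
  have hsmall : ∀ᶠ α in 𝓝 (0 : ℝ), α ≤ 1 / 4 := eventually_le_nhds (by norm_num)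
  filter_upwards [nhdsWithin_le_nhds (hbound.and hsmall), self_mem_nhdsWithin]
    with α ⟨hα, hα'⟩ hmem
  by_contra! hBC
  obtain ⟨hγ₁, hγ₀⟩ := div_two_mul_sub_one_mem_Icc hmem.1.le hα'
  have key : B α * deriv (fun y => F α y) (B α) - F α (B α) ≤ bound α :=
    mul_deriv_sub_le hγ₁ hγ₀ (by linarith [hmem.1]) (by linarith [hmem.2])
      (gammaRatio_pos hmem.1.le hmem.2).le ((abs_of_pos (hBpos α hmem)).trans_le hBC.le)
  linarith [hB α hmem]
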